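/- Let E ⊂ ℝ² be measurable, Φ ∈ W^{1,1} on a neighborhood of E, and suppose ∫_E |∇Φ|² dx ≤ F' t² and, for a.e. y in an interval I of length t/4 contained in the essential range, H¹(E ∩ Φ⁻¹(y)) ≥ c₀ > 0. Then, via the coarea formula and Cauchy–Schwarz, (c₀ t)/4 ≤ ∫_I H¹(E ∩ Φ⁻¹(y)) dy = ∫_E |∇Φ| dx ≤ (F')^{1/2} t (meas E)^{1/2}; hence meas(E) ≥ c₀²/(16 F'). -/

import Mathlib

open MeasureTheory Set

theorem sq_lintegral_le_lintegral_sq_mul_measure_univ {α : Type*} [MeasurableSpace α]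
    (μ : Measure α) {f : α → ENNReal} (hf : AEMeasurable f μ) :
    (∫⁻ x, f x ∂μ) ^ 2 ≤ (∫⁻ x, f x ^ 2 ∂μ) * μ univ := by
  have holder := ENNReal.lintegral_mul_le_Lp_mul_Lq μ Real.HolderConjugate.two_two hf
    (aemeasurable_const (b := 1))
  simp only [Pi.mul_apply, mul_one, ENNReal.rpow_two, one_pow, lintegral_const, one_mul] at holder
  calc (∫⁻ x, f x ∂μ) ^ 2
      ≤ ((∫⁻ x, f x ^ 2 ∂μ) ^ (1 / 2 : ℝ) * μ univ ^ (1 / 2 : ℝ)) ^ 2 := by gcongr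
    _ = (∫⁻ x, f x ^ 2 ∂μ) * μ univ := by
      rw [mul_pow, ← ENNReal.rpow_mul_natCast, ← ENNReal.rpow_mul_natCast]
      norm_num

theorem const_mul_measure_le_lintegral {α : Type*} [MeasurableSpace α] {μ : Measure α}
    {s : Set α} {c : ENNReal} {f : α → ENNReal} (h : ∀ᵐ x ∂μ.restrict s, c ≤ f x) :
    c * μ s ≤ ∫⁻ x, f x ∂μ :=
  calc c * μ s = ∫⁻ _ in s, c ∂μ := (setLIntegral_const s c).symm
    _ ≤ ∫⁻ x in s, f x ∂μ := lintegral_mono_ae h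
    _ ≤ ∫⁻ x, f x ∂μ := setLIntegral_le_lintegral s f

theorem measure_lower_bound_from_coarea_general
    (E : Set (ℝ × ℝ)) (hEfin : volume E ≠ ⊤)
    (Φ : ℝ × ℝ → ℝ) (g : ℝ × ℝ → ℝ × ℝ)
    (t c₀ F' a : ℝ) (ht : 0 < t) (hc₀ : 0 < c₀)
    (hgrad2 : IntegrableOn (fun x => ‖g x‖ ^ 2) E)
    (hub : ∫ x in E, ‖g x‖ ^ 2 ≤ F' * t ^ 2)
    (hco : ∫⁻ y, μH[1] (E ∩ Φ ⁻¹' {y}) = ∫⁻ x in E, ENNReal.ofReal ‖g x‖)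
    (hlen : ∀ᵐ y ∂(volume.restrict (Icc a (a + t / 4))),
      ENNReal.ofReal c₀ ≤ μH[1] (E ∩ Φ ⁻¹' {y})) :
    c₀ ^ 2 / (16 * F') ≤ (volume E).toReal := by
  have hlevel : ENNReal.ofReal (c₀ * (t / 4)) ≤ ∫⁻ x in E, ENNReal.ofReal ‖g x‖ := by
    rw [← hco, ENNReal.ofReal_mul hc₀.le]
    simpa [Real.volume_Icc] using const_mul_measure_le_lintegral hlen
  have hdirichlet : ∫⁻ x in E, ENNReal.ofReal ‖g x‖ ^ 2 ≤ ENNReal.ofReal (F' * t ^ 2) := by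
    simp_rw [← ENNReal.ofReal_pow (norm_nonneg _),
      ← ofReal_integral_eq_lintegral_ofReal hgrad2 (ae_of_all _ fun x => sq_nonneg ‖g x‖)]
    exact ENNReal.ofReal_le_ofReal hub
  have hmeas : AEMeasurable (fun x => ENNReal.ofReal ‖g x‖) (volume.restrict E) :=
    (hgrad2.aemeasurable.sqrt.congr
      (ae_of_all _ fun x => Real.sqrt_sq (norm_nonneg _))).ennreal_ofReal
  have hsq : (c₀ * (t / 4)) ^ 2 ≤ F' * t ^ 2 * (volume E).toReal := by
    refine (ENNReal.ofReal_le_ofReal_iff'.mp ?_).resolve_right (not_le.mpr (by positivity))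
    rw [ENNReal.ofReal_pow (by positivity), ENNReal.ofReal_mul' ENNReal.toReal_nonneg,
      ENNReal.ofReal_toReal hEfin]
    calc ENNReal.ofReal (c₀ * (t / 4)) ^ 2 ≤ (∫⁻ x in E, ENNReal.ofReal ‖g x‖) ^ 2 := by gcongr
      _ ≤ (∫⁻ x in E, ENNReal.ofReal ‖g x‖ ^ 2) * volume E := by
        simpa using sq_lintegral_le_lintegral_sq_mul_measure_univ _ hmeas
      _ ≤ ENNReal.ofReal (F' * t ^ 2) * volume E := by gcongr
  have hFm : c₀ ^ 2 / 16 ≤ F' * (volume E).toReal :=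
    le_of_mul_le_mul_right (by linarith) (pow_pos ht 2)
  have hF' : 0 < F' := pos_of_mul_pos_left (by linarith [sq_pos_of_pos hc₀]) ENNReal.toReal_nonneg
  rw [div_le_iff₀ (by positivity)]
  linarith

/-- Final contradiction step (Lemma 3.9): if `∫_E |∇Φ|² ≤ F' t²`, the coarea formula holds for
`Φ` on `E`, and for a.e. `y` in an interval `I` of length `t/4` the level set `E ∩ Φ⁻¹(y)` has
`H¹`-measure at least `c₀ > 0`, then `meas(E) ≥ c₀²/(16 F')`. -/
theorem measure_lower_bound_from_coarea
    (E : Set (ℝ × ℝ)) (hE : MeasurableSet E) (hEfin : volume E ≠ ⊤)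
    (Φ : ℝ × ℝ → ℝ) (g : ℝ × ℝ → ℝ × ℝ)
    (t c₀ F' a : ℝ) (ht : 0 < t) (hc₀ : 0 < c₀) (hF' : 0 < F')
    (hgrad2 : IntegrableOn (fun x => ‖g x‖ ^ 2) E)
    (hub : ∫ x in E, ‖g x‖ ^ 2 ≤ F' * t ^ 2)
    (hco : ∫⁻ y, μH[1] (E ∩ Φ ⁻¹' {y}) = ∫⁻ x in E, ENNReal.ofReal ‖g x‖)
    (hlen : ∀ᵐ y ∂(volume.restrict (Icc a (a + t / 4))),
      ENNReal.ofReal c₀ ≤ μH[1] (E ∩ Φ ⁻¹' {y})) :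
    c₀ ^ 2 / (16 * F') ≤ (volume E).toReal :=
  measure_lower_bound_from_coarea_general E hEfin Φ g t c₀ F' a ht hc₀ hgrad2 hub hco hlen
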